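/- Under the hypotheses of the main theorem, the odd part of K_{n=1}^∞ a_n/1 converges to a finite value; in particular |a₃ + 1 + a₂| > 0 and all subsequent denominators a_{2n+1}+1+a_{2n} of the odd part are nonzero. -/

import Mathlib

/-!
The odd part is the contraction of `K aₙ/1` to a three-term recurrence
`Q (n+2) = d (n+1) Q (n+1) - e n Q n` with `d k = a_{2k+3} + 1 + a_{2k+2}` and
`e k = a_{2k+3} a_{2k+4}`. The hypotheses give `β_n |a_{2n}| ≤ |a_{2n+1} + 1 + a_{2n}|` and
`4 |a_{2n+1}| ≤ β_n β_{n+1} |a_{2n}|`, hence `d k ≠ 0` and Worpitzky's condition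
`4 |e k| ≤ |d k| |d (k+1)|`.

Under that condition, `u n = |Q n| / ∏_{k<n} (|d k| / 2)` satisfies `u 0 = 1`, `u 1 = 2` and
`u (n+2) ≥ 2 u (n+1) - t n u n` with `t n = 4 |e n| / (|d n| |d (n+1)|) ∈ [0, 1]`, so `u (n+1) - u n ≥ ∏_{k<n} t k` and `u n ≥ 1`.
The distance between consecutive approximants is a constant times `∏_{k<n} t k / (u n u (n+1))`,
which is at most `1 / u n - 1 / u (n+1)`; these telescope, so the approximants form a Cauchy sequence.
-/

open Filter Topology Finset

def SolvesThreeTerm {R : Type*} [Ring R] (d e X : ℕ → R) : Prop :=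
  ∀ n, X (n + 2) = d (n + 1) * X (n + 1) - e n * X n

theorem SolvesThreeTerm.casoratian_eq {R : Type*} [CommRing R] {d e X Y : ℕ → R}
    (hX : SolvesThreeTerm d e X) (hY : SolvesThreeTerm d e Y) (n : ℕ) :
    X (n + 1) * Y n - X n * Y (n + 1) = (∏ k ∈ range n, e k) * (X 1 * Y 0 - X 0 * Y 1) := by
  induction n with
  | zero => simp
  | succ n ih =>
    show X (n + 2) * Y (n + 1) - X (n + 1) * Y (n + 2) = _
    rw [prod_range_succ, hX n, hY n]
    linear_combination e n * ih

section Normalized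

variable {u t : ℕ → ℝ}

theorem prod_le_sub_and_one_le (ht0 : ∀ n, 0 ≤ t n) (ht1 : ∀ n, t n ≤ 1) (hu0 : u 0 = 1)
    (hu1 : u 1 = 2) (hu : ∀ n, 2 * u (n + 1) - t n * u n ≤ u (n + 2)) (n : ℕ) :
    ∏ k ∈ range n, t k ≤ u (n + 1) - u n ∧ 1 ≤ u n := by
  induction n with
  | zero => norm_num [hu0, hu1]
  | succ n ih =>
    obtain ⟨hdiff, hone⟩ := ih
    have hprod : 0 ≤ ∏ k ∈ range n, t k := prod_nonneg fun k _ => ht0 k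
    refine ⟨?_, by linarith⟩
    rw [prod_range_succ]
    nlinarith [hu n, ht0 n, ht1 n, mul_le_mul_of_nonneg_left (ht1 n) hprod]

theorem summable_prod_div_mul (ht0 : ∀ n, 0 ≤ t n) (ht1 : ∀ n, t n ≤ 1) (hu0 : u 0 = 1)
    (hu1 : u 1 = 2) (hu : ∀ n, 2 * u (n + 1) - t n * u n ≤ u (n + 2)) :
    Summable fun n => (∏ k ∈ range n, t k) / (u n * u (n + 1)) := by
  have key := prod_le_sub_and_one_le ht0 ht1 hu0 hu1 hu
  have hpos n : 0 < u n := one_pos.trans_le (key n).2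
  have hterm n : (∏ k ∈ range n, t k) / (u n * u (n + 1)) ≤ (u n)⁻¹ - (u (n + 1))⁻¹ := by
    rw [inv_sub_inv (hpos n).ne' (hpos (n + 1)).ne']
    exact div_le_div_of_nonneg_right (key n).1 (mul_pos (hpos n) (hpos (n + 1))).le
  refine summable_of_sum_range_le (c := 1) (fun n => ?_) fun N => ?_
  · exact div_nonneg (prod_nonneg fun k _ => ht0 k) (mul_pos (hpos n) (hpos (n + 1))).le
  calc ∑ n ∈ range N, (∏ k ∈ range n, t k) / (u n * u (n + 1))
      ≤ ∑ n ∈ range N, ((u n)⁻¹ - (u (n + 1))⁻¹) := sum_le_sum fun n _ => hterm n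
    _ = (u 0)⁻¹ - (u N)⁻¹ := sum_range_sub' _ N
    _ ≤ 1 := by rw [hu0, inv_one]; linarith [inv_nonneg.mpr (hpos N).le]

end Normalized

section Worpitzky

variable {𝕜 : Type*} [NormedField 𝕜] {d e Q : ℕ → 𝕜}

noncomputable def halfNormProd (d : ℕ → 𝕜) (n : ℕ) : ℝ := ∏ k ∈ range n, ‖d k‖ / 2

theorem halfNormProd_succ (d : ℕ → 𝕜) (n : ℕ) :
    halfNormProd d (n + 1) = halfNormProd d n * (‖d n‖ / 2) :=
  prod_range_succ _ _

theorem halfNormProd_pos (hd : ∀ n, d n ≠ 0) (n : ℕ) : 0 < halfNormProd d n :=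
  prod_pos fun k _ => half_pos (norm_pos_iff.mpr (hd k))

theorem SolvesThreeTerm.normalized_le (hQ : SolvesThreeTerm d e Q) (hd : ∀ n, d n ≠ 0) (n : ℕ) :
    2 * (‖Q (n + 1)‖ / halfNormProd d (n + 1))
        - 4 * ‖e n‖ / (‖d n‖ * ‖d (n + 1)‖) * (‖Q n‖ / halfNormProd d n)
      ≤ ‖Q (n + 2)‖ / halfNormProd d (n + 2) := by
  have hnorm : ‖d (n + 1)‖ * ‖Q (n + 1)‖ - ‖e n‖ * ‖Q n‖ ≤ ‖Q (n + 2)‖ := by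
    rw [hQ n, ← norm_mul, ← norm_mul]
    exact norm_sub_norm_le _ _
  have hP := halfNormProd_pos hd n
  have hd0 := norm_pos_iff.mpr (hd n)
  have hd1 := norm_pos_iff.mpr (hd (n + 1))
  calc _ = (‖d (n + 1)‖ * ‖Q (n + 1)‖ - ‖e n‖ * ‖Q n‖) / halfNormProd d (n + 2) := by
        rw [halfNormProd_succ d (n + 1), halfNormProd_succ d n]
        field_simp
        ring
    _ ≤ _ := div_le_div_of_nonneg_right hnorm (halfNormProd_pos hd _).le

theorem prod_mul_halfNormProd (hd : ∀ n, d n ≠ 0) (n : ℕ) :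
    (∏ k ∈ range n, 4 * ‖e k‖ / (‖d k‖ * ‖d (k + 1)‖))
        * (halfNormProd d n * halfNormProd d (n + 1))
      = ‖d 0‖ / 2 * ‖∏ k ∈ range n, e k‖ := by
  induction n with
  | zero => simp [halfNormProd]
  | succ n ih =>
    have hd0 := norm_pos_iff.mpr (hd n)
    have hd1 := norm_pos_iff.mpr (hd (n + 1))
    rw [prod_range_succ, prod_range_succ, norm_mul, ← mul_assoc (‖d 0‖ / 2), ← ih,
      halfNormProd_succ d (n + 1), halfNormProd_succ d n]
    field_simp
    ring

theorem SolvesThreeTerm.ne_zero_and_summable (hQ : SolvesThreeTerm d e Q) (hd : ∀ n, d n ≠ 0)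
    (he : ∀ n, 4 * ‖e n‖ ≤ ‖d n‖ * ‖d (n + 1)‖) (hQ0 : Q 0 = 1) (hQ1 : Q 1 = d 0) :
    (∀ n, Q n ≠ 0) ∧ Summable fun n => ‖∏ k ∈ range n, e k‖ / (‖Q n‖ * ‖Q (n + 1)‖) := by
  set P := halfNormProd d
  set u : ℕ → ℝ := fun n => ‖Q n‖ / P n
  set t : ℕ → ℝ := fun n => 4 * ‖e n‖ / (‖d n‖ * ‖d (n + 1)‖)
  have hdpos n : 0 < ‖d n‖ := norm_pos_iff.mpr (hd n)
  have hP n : 0 < P n := halfNormProd_pos hd n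
  have ht0 n : 0 ≤ t n := by positivity
  have ht1 n : t n ≤ 1 := (div_le_one (mul_pos (hdpos n) (hdpos (n + 1)))).mpr (he n)
  have hu0 : u 0 = 1 := by simp [u, P, halfNormProd, hQ0]
  have hu1 : u 1 = 2 := by
    simp only [u, P, halfNormProd_succ, hQ1]
    simp [halfNormProd, (hdpos 0).ne']
  have hu : ∀ n, 2 * u (n + 1) - t n * u n ≤ u (n + 2) := hQ.normalized_le hd
  have hQpos n : 0 < ‖Q n‖ := by
    have := (prod_le_sub_and_one_le ht0 ht1 hu0 hu1 hu n).2
    exact (hP n).trans_le ((one_le_div (hP n)).mp this)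
  refine ⟨fun n => norm_pos_iff.mp (hQpos n), ?_⟩
  refine ((summable_prod_div_mul ht0 ht1 hu0 hu1 hu).mul_left (2 / ‖d 0‖)).congr fun n => ?_
  have hprod : (∏ k ∈ range n, t k) * (P n * P (n + 1)) = ‖d 0‖ / 2 * ‖∏ k ∈ range n, e k‖ :=
    prod_mul_halfNormProd hd n
  have hnorm : ‖∏ k ∈ range n, e k‖ = 2 / ‖d 0‖ * ((∏ k ∈ range n, t k) * (P n * P (n + 1))) := by
    rw [hprod]
    field_simp [(hdpos 0).ne']
  rw [hnorm]
  simp only [u]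
  field_simp [(hdpos 0).ne', (hP n).ne', (hP (n + 1)).ne']

theorem SolvesThreeTerm.exists_tendsto_div [CompleteSpace 𝕜] {X : ℕ → 𝕜}
    (hX : SolvesThreeTerm d e X) (hQ : SolvesThreeTerm d e Q) (hd : ∀ n, d n ≠ 0)
    (he : ∀ n, 4 * ‖e n‖ ≤ ‖d n‖ * ‖d (n + 1)‖) (hQ0 : Q 0 = 1) (hQ1 : Q 1 = d 0) :
    ∃ L, Tendsto (fun n => X n / Q n) atTop (𝓝 L) := by
  obtain ⟨hQne, hsum⟩ := hQ.ne_zero_and_summable hd he hQ0 hQ1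
  have hdist n : dist (X n / Q n) (X (n + 1) / Q (n + 1))
      = ‖X 1 * Q 0 - X 0 * Q 1‖ * (‖∏ k ∈ range n, e k‖ / (‖Q n‖ * ‖Q (n + 1)‖)) := by
    rw [dist_comm, dist_eq_norm, div_sub_div _ _ (hQne (n + 1)) (hQne n),
      mul_comm (Q (n + 1)), hX.casoratian_eq hQ n, norm_div, norm_mul, norm_mul]
    ring
  exact cauchySeq_tendsto_of_complete <| cauchySeq_of_summable_dist <|
    (hsum.mul_left _).congr fun n => (hdist n).symm

end Worpitzky

section Contraction

variable {R : Type*} [CommRing R] {a X : ℕ → R}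

theorem continuant_add_four (hX : ∀ N : ℕ, 1 ≤ N → X (N + 1) = X N + a N * X (N - 1)) (N : ℕ) :
    X (N + 4) = (a (N + 3) + 1 + a (N + 2)) * X (N + 2) - a (N + 1) * a (N + 2) * X N := by
  have h1 : X (N + 2) = X (N + 1) + a (N + 1) * X N := hX (N + 1) (by omega)
  have h2 : X (N + 3) = X (N + 2) + a (N + 2) * X (N + 1) := hX (N + 2) (by omega)
  have h3 : X (N + 4) = X (N + 3) + a (N + 3) * X (N + 2) := hX (N + 3) (by omega)
  linear_combination h3 + h2 - a (N + 2) * h1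

theorem solvesThreeTerm_odd_part (hX : ∀ N : ℕ, 1 ≤ N → X (N + 1) = X N + a N * X (N - 1)) :
    SolvesThreeTerm (fun k => a (2 * k + 3) + 1 + a (2 * k + 2))
      (fun k => a (2 * k + 3) * a (2 * k + 4)) (fun k => X (2 * k + 2)) :=
  fun n => continuant_add_four hX (2 * n + 2)

end Contraction

section Estimates

variable {𝕜 : Type*} [NormedField 𝕜] {x y : 𝕜} {c β : ℝ}

theorem mul_norm_le_norm_add_one_add (hβ : β < 1) (hy : (c + 1) / (1 - β) ≤ ‖y‖)
    (hx : ‖x‖ ≤ c) : β * ‖y‖ ≤ ‖x + 1 + y‖ := by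
  have hc : c + 1 ≤ (1 - β) * ‖y‖ := by rwa [div_le_iff₀' (by linarith)] at hy
  have htri : ‖y‖ ≤ ‖x + 1 + y‖ + ‖x‖ + 1 := by
    calc ‖y‖ = ‖(x + 1 + y) - x - 1‖ := by ring_nf
      _ ≤ ‖x + 1 + y - x‖ + ‖(1 : 𝕜)‖ := norm_sub_le _ _
      _ ≤ ‖x + 1 + y‖ + ‖x‖ + 1 := by
        rw [norm_one]
        gcongr
        exact norm_sub_le _ _
  linarith

theorem norm_add_one_add_pos (hβ : 0 < β ∧ β < 1) (hy : (c + 1) / (1 - β) ≤ ‖y‖)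
    (hx : ‖x‖ ≤ c) : 0 < ‖x + 1 + y‖ := by
  have hbound : 0 < (c + 1) / (1 - β) := div_pos (by linarith [norm_nonneg x]) (by linarith)
  exact (mul_pos hβ.1 (hbound.trans_le hy)).trans_le (mul_norm_le_norm_add_one_add hβ.2 hy hx)

theorem four_mul_norm_mul_le {x' y' : 𝕜} {c' β' : ℝ} (hβ : 0 < β ∧ β < 1) (hβ' : 0 < β' ∧ β' < 1)
    (hy : (c + 1) / (1 - β) ≤ ‖y‖) (hx : ‖x‖ ≤ c)
    (hx4 : ‖x‖ ≤ β * β' * (c + 1) / (4 * (1 - β)))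
    (hy' : (c' + 1) / (1 - β') ≤ ‖y'‖) (hx' : ‖x'‖ ≤ c') :
    4 * ‖x * y'‖ ≤ ‖x + 1 + y‖ * ‖x' + 1 + y'‖ := by
  have hxy : 4 * ‖x‖ ≤ β * β' * ‖y‖ := by
    calc 4 * ‖x‖ ≤ β * β' * ((c + 1) / (1 - β)) := by
          rw [le_div_iff₀ (by linarith)] at hx4
          rw [← mul_div_assoc, le_div_iff₀ (by linarith)]
          linarith
      _ ≤ β * β' * ‖y‖ := mul_le_mul_of_nonneg_left hy (mul_pos hβ.1 hβ'.1).le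
  calc 4 * ‖x * y'‖ = 4 * ‖x‖ * ‖y'‖ := by rw [norm_mul, mul_assoc]
    _ ≤ β * β' * ‖y‖ * ‖y'‖ := mul_le_mul_of_nonneg_right hxy (norm_nonneg _)
    _ = (β * ‖y‖) * (β' * ‖y'‖) := by ring
    _ ≤ ‖x + 1 + y‖ * ‖x' + 1 + y'‖ :=
      mul_le_mul (mul_norm_le_norm_add_one_add hβ.2 hy hx)
        (mul_norm_le_norm_add_one_add hβ'.2 hy' hx')
        (mul_nonneg hβ'.1.le (norm_nonneg _)) (norm_nonneg _)

end Estimates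

/-- `A (N + 1)` and `B (N + 1)` are the canonical numerator and denominator `A_N`, `B_N`
(so `B 0 = B_{-1}`), and `A (2k+2) / B (2k+2)` is the `k`-th approximant of the odd part. -/
theorem odd_part_converges_general (a : ℕ → ℂ) (c β : ℕ → ℝ)
    (hβ : ∀ n : ℕ, 1 ≤ n → 0 < β n ∧ β n < 1)
    (heven : ∀ n : ℕ, 1 ≤ n → (c n + 1) / (1 - β n) ≤ ‖a (2 * n)‖)
    (hodd : ∀ n : ℕ, 1 ≤ n →
      ‖a (2 * n + 1)‖ ≤
        min (min (c n) (c (n + 1)))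
          (min (β n * β (n + 1) * (c (n + 1) + 1) / (4 * (1 - β (n + 1))))
               (β n * β (n + 1) * (c n + 1) / (4 * (1 - β n)))))
    (A B : ℕ → ℂ)
    (hB0 : B 0 = 0) (hB1 : B 1 = 1)
    (hArec : ∀ N : ℕ, 1 ≤ N → A (N + 1) = A N + a N * A (N - 1))
    (hBrec : ∀ N : ℕ, 1 ≤ N → B (N + 1) = B N + a N * B (N - 1)) :
    (0 < ‖a 3 + 1 + a 2‖) ∧
      (∀ n : ℕ, 1 ≤ n → a (2 * n + 1) + 1 + a (2 * n) ≠ 0) ∧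
      ∃ L : ℂ, Tendsto (fun k : ℕ => A (2 * k + 2) / B (2 * k + 2)) atTop (𝓝 L) := by
  have hodd_c n (hn : 1 ≤ n) : ‖a (2 * n + 1)‖ ≤ c n :=
    (hodd n hn).trans ((min_le_left _ _).trans (min_le_left _ _))
  have hodd_β n (hn : 1 ≤ n) : ‖a (2 * n + 1)‖ ≤ β n * β (n + 1) * (c n + 1) / (4 * (1 - β n)) :=
    (hodd n hn).trans ((min_le_right _ _).trans (min_le_right _ _))
  have hpos n (hn : 1 ≤ n) : 0 < ‖a (2 * n + 1) + 1 + a (2 * n)‖ :=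
    norm_add_one_add_pos (hβ n hn) (heven n hn) (hodd_c n hn)
  have hprod n (hn : 1 ≤ n) : 4 * ‖a (2 * n + 1) * a (2 * n + 2)‖
      ≤ ‖a (2 * n + 1) + 1 + a (2 * n)‖ * ‖a (2 * n + 3) + 1 + a (2 * n + 2)‖ :=
    four_mul_norm_mul_le (hβ n hn) (hβ (n + 1) (by omega)) (heven n hn) (hodd_c n hn)
      (hodd_β n hn) (heven (n + 1) (by omega)) (hodd_c (n + 1) (by omega))
  have hB2 : B 2 = 1 := by simpa [hB0, hB1] using hBrec 1 le_rfl
  have hB4 : B 4 = a 3 + 1 + a 2 := by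
    have := continuant_add_four hBrec 0
    simp only [zero_add, hB0, mul_zero, sub_zero] at this
    rw [this, hB2, mul_one]
  refine ⟨hpos 1 le_rfl, fun n hn => norm_pos_iff.mp (hpos n hn), ?_⟩
  exact (solvesThreeTerm_odd_part hArec).exists_tendsto_div (solvesThreeTerm_odd_part hBrec)
    (fun k => norm_pos_iff.mp (hpos (k + 1) (by omega))) (fun k => hprod (k + 1) (by omega)) hB2 hB4

/-- Under the hypotheses of the main theorem, the odd part of K a_n/1 converges;
in particular all its denominators are nonzero.
Indexing: `A (N+1)` is the `N`-th canonical numerator (so `A 0 = A_{-1} = 1`). -/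
theorem odd_part_converges (a : ℕ → ℂ) (c β : ℕ → ℝ)
    (ha : ∀ n : ℕ, 1 ≤ n → a n ≠ 0)
    (hc : ∀ n : ℕ, 1 ≤ n → 0 < c n)
    (hβ : ∀ n : ℕ, 1 ≤ n → 0 < β n ∧ β n < 1)
    (heven : ∀ n : ℕ, 1 ≤ n → (c n + 1) / (1 - β n) ≤ ‖a (2 * n)‖)
    (hodd : ∀ n : ℕ, 1 ≤ n →
      ‖a (2 * n + 1)‖ ≤
        min (min (c n) (c (n + 1)))
          (min (β n * β (n + 1) * (c (n + 1) + 1) / (4 * (1 - β (n + 1))))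
               (β n * β (n + 1) * (c n + 1) / (4 * (1 - β n)))))
    (A B : ℕ → ℂ)
    (hA0 : A 0 = 1) (hA1 : A 1 = 0) (hB0 : B 0 = 0) (hB1 : B 1 = 1)
    (hArec : ∀ N : ℕ, 1 ≤ N → A (N + 1) = A N + a N * A (N - 1))
    (hBrec : ∀ N : ℕ, 1 ≤ N → B (N + 1) = B N + a N * B (N - 1)) :
    (0 < ‖a 3 + 1 + a 2‖) ∧
      (∀ n : ℕ, 1 ≤ n → a (2 * n + 1) + 1 + a (2 * n) ≠ 0) ∧
      ∃ L : ℂ, Tendsto (fun k : ℕ => A (2 * k + 2) / B (2 * k + 2)) atTop (𝓝 L) :=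
  odd_part_converges_general a c β hβ heven hodd A B hB0 hB1 hArec hBrec
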